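/- arXiv:2511.22015 — 2 statements merged into one kernel-verified Lean document; each statement's English description precedes it below -/
import Mathlib

section
/- Let W₀ be a word of length L₀ over an alphabet such that no proper nonempty prefix of W₀ is a suffix of W₀. For a word S and q ≥ 0, the map sending a word W of length n (avoiding W₀ as a factor) together with a choice of q insertion gaps (with multiplicity) to the word obtained by inserting q copies of W₀ at those gaps is injective; that is, the original word W and the insertion positions can be uniquely recovered from the result. -/
/-!
Peel off the last inserted block. In the result `A ++ w0 ++ S`, the suffix `S` is a suffix of
`W` and hence avoids `w0`; so this is the rightmost occurrence of `w0`, because any occurrence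
further right would either overlap it, producing a proper nonempty prefix of `w0` that is also a
suffix, or lie inside `S`. Hence `A` and `S` are determined, the length of `A` determines the
last gap, and induction on the number of blocks recovers the remaining gaps and the prefix of `W`.
-/

/-- Insert a copy of `w0` at each gap position in `ps` (positions refer to gaps of the
original word; `ps` is processed from largest to smallest so that earlier insertions
do not shift later positions). -/
def insertBlocks {α : Type*} (w0 W : List α) (ps : List ℕ) : List α :=
  ps.foldl (fun acc p => acc.take p ++ w0 ++ acc.drop p) W

namespace List

variable {α : Type*}

def IsUnbordered (w : List α) : Prop :=
  ∀ k, 1 ≤ k → k ≤ w.length - 1 → w.take k ≠ w.drop (w.length - k)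

theorem IsUnbordered.eq_nil_of_isPrefix {w C E : List α} (hw : w.IsUnbordered)
    (hsplit : w = C ++ E) (hC : C ≠ []) (hE : E <+: w) : E = [] := by
  by_contra hE0
  have hlen : w.length = C.length + E.length := by simp [hsplit]
  have hC0 : C.length ≠ 0 := by simpa using hC
  have hE0' : E.length ≠ 0 := by simpa using hE0
  refine hw E.length (by omega) (by omega) ?_
  rw [← prefix_iff_eq_take.mp hE, show w.length - E.length = C.length by omega, hsplit, drop_left]

theorem IsUnbordered.length_le_of_append_eq {w A A' S S' : List α} (hw : w.IsUnbordered)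
    (h : A ++ (w ++ S) = A' ++ (w ++ S')) (hS : ¬ w <:+: S) : A'.length ≤ A.length := by
  by_contra hlt
  rcases append_eq_append_iff.mp h with ⟨C, rfl, hC⟩ | ⟨C, rfl, -⟩
  · have hC0 : C ≠ [] := by rintro rfl; simp at hlt
    rcases append_eq_append_iff.mp hC with ⟨D, rfl, rfl⟩ | ⟨E, hsplit, hE⟩
    · exact hS ⟨D, S', by simp⟩
    · have hEw : E <+: w :=
        prefix_of_prefix_length_le ⟨S, hE.symm⟩ (prefix_append w S') (by simp [hsplit])
      obtain rfl := hw.eq_nil_of_isPrefix hsplit hC0 hEw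
      exact hS ⟨[], S', by simp_all⟩
  · simp at hlt

theorem IsUnbordered.append_inj {w A A' S S' : List α} (hw : w.IsUnbordered)
    (h : A ++ (w ++ S) = A' ++ (w ++ S')) (hS : ¬ w <:+: S) (hS' : ¬ w <:+: S') :
    A = A' ∧ S = S' := by
  have hA := le_antisymm (hw.length_le_of_append_eq h.symm hS') (hw.length_le_of_append_eq h hS)
  obtain ⟨hAA', hSS'⟩ := List.append_inj h hA
  exact ⟨hAA', append_cancel_left hSS'⟩

end List

section InsertBlocks

variable {α : Type*} (w0 : List α)

theorem insertBlocks_nil (W : List α) : insertBlocks w0 W [] = W := rfl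

theorem insertBlocks_cons (W : List α) (p : ℕ) (ps : List ℕ) :
    insertBlocks w0 W (p :: ps) = insertBlocks w0 (W.take p ++ w0 ++ W.drop p) ps := rfl

theorem length_insertBlocks (W : List α) (ps : List ℕ) :
    (insertBlocks w0 W ps).length = W.length + ps.length * w0.length := by
  induction ps generalizing W with
  | nil => simp [insertBlocks_nil]
  | cons p ps ih =>
    rw [insertBlocks_cons, ih]
    simp only [List.length_append, List.length_take, List.length_drop, List.length_cons]
    grind

theorem insertBlocks_append (A B : List α) (ps : List ℕ) (hps : ∀ p ∈ ps, p ≤ A.length) :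
    insertBlocks w0 (A ++ B) ps = insertBlocks w0 A ps ++ B := by
  induction ps generalizing A with
  | nil => rfl
  | cons p ps ih =>
    have hp : p ≤ A.length := hps p List.mem_cons_self
    rw [insertBlocks_cons, insertBlocks_cons, List.take_append_of_le_length hp,
      List.drop_append_of_le_length hp, ← List.append_assoc, ih]
    intro x hx
    have := hps x (List.mem_cons_of_mem p hx)
    simp only [List.length_append, List.length_take, List.length_drop]
    omega

theorem insertBlocks_cons_eq_append (W : List α) (p : ℕ) (ps : List ℕ) (hp : p ≤ W.length)
    (hps : ∀ x ∈ ps, x ≤ p) :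
    insertBlocks w0 W (p :: ps) = insertBlocks w0 (W.take p) ps ++ (w0 ++ W.drop p) := by
  rw [insertBlocks_cons, List.append_assoc, insertBlocks_append]
  simpa [hp] using hps

theorem insertBlocks_inj (hw0 : w0.IsUnbordered) {W W' : List α} {ps ps' : List ℕ}
    (hlen : ps.length = ps'.length) (hW : ¬ w0 <:+: W) (hW' : ¬ w0 <:+: W')
    (hsort : ps.Pairwise (· ≥ ·)) (hsort' : ps'.Pairwise (· ≥ ·))
    (hle : ∀ p ∈ ps, p ≤ W.length) (hle' : ∀ p ∈ ps', p ≤ W'.length)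
    (heq : insertBlocks w0 W ps = insertBlocks w0 W' ps') : W = W' ∧ ps = ps' := by
  induction ps generalizing W W' ps' with
  | nil =>
    obtain rfl := List.length_eq_zero_iff.mp hlen.symm
    exact ⟨heq, rfl⟩
  | cons p ps ih =>
    obtain _ | ⟨p', ps'⟩ := ps'
    · simp at hlen
    rw [List.length_cons, List.length_cons, Nat.add_right_cancel_iff] at hlen
    have hp := hle p List.mem_cons_self
    have hp' := hle' p' List.mem_cons_self
    obtain ⟨hps, hsort_tail⟩ := List.pairwise_cons.mp hsort
    obtain ⟨hps', hsort_tail'⟩ := List.pairwise_cons.mp hsort'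
    rw [insertBlocks_cons_eq_append w0 W p ps hp hps,
      insertBlocks_cons_eq_append w0 W' p' ps' hp' hps'] at heq
    obtain ⟨hprefix, hdrop⟩ := hw0.append_inj heq
      (fun h => hW (h.trans (W.drop_suffix p).isInfix))
      (fun h => hW' (h.trans (W'.drop_suffix p').isInfix))
    have hpp' : p = p' := by
      have := congrArg List.length hprefix
      simpa only [length_insertBlocks, List.length_take, min_eq_left hp, min_eq_left hp', hlen,
        Nat.add_right_cancel_iff] using this
    subst hpp'
    obtain ⟨htake, rfl⟩ := ih hlen
      (fun h => hW (h.trans (W.take_prefix p).isInfix))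
      (fun h => hW' (h.trans (W'.take_prefix p).isInfix)) hsort_tail hsort_tail'
      (fun x hx => by simpa [hp] using hps x hx) (fun x hx => by simpa [hp'] using hps' x hx)
      hprefix
    refine ⟨?_, rfl⟩
    rw [← W.take_append_drop p, ← W'.take_append_drop p, htake, hdrop]

end InsertBlocks

theorem stmt_10_general {α : Type*} (w0 : List α) (L₀ : ℕ) (hlen : w0.length = L₀)
    (hpre : ∀ k, 1 ≤ k → k ≤ L₀ - 1 → w0.take k ≠ w0.drop (L₀ - k))
    (n q : ℕ) (W W' : List α) (hW : W.length = n) (hW' : W'.length = n)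
    (hav : ¬ w0 <:+: W) (hav' : ¬ w0 <:+: W')
    (ps ps' : List ℕ) (hq : ps.length = q) (hq' : ps'.length = q)
    (hsor : ps.Pairwise (· ≥ ·)) (hsor' : ps'.Pairwise (· ≥ ·))
    (hle : ∀ p ∈ ps, p ≤ n) (hle' : ∀ p ∈ ps', p ≤ n)
    (heq : insertBlocks w0 W ps = insertBlocks w0 W' ps') :
    W = W' ∧ ps = ps' := by
  subst hlen hW hq
  exact insertBlocks_inj w0 hpre hq'.symm hav hav' hsor hsor' hle (hW' ▸ hle') heq

theorem stmt_10 {α : Type*} (w0 : List α) (L₀ : ℕ) (hlen : w0.length = L₀) (hL₀ : 1 ≤ L₀)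
    (hpre : ∀ k, 1 ≤ k → k ≤ L₀ - 1 → w0.take k ≠ w0.drop (L₀ - k))
    (n q : ℕ) (W W' : List α) (hW : W.length = n) (hW' : W'.length = n)
    (hav : ¬ w0 <:+: W) (hav' : ¬ w0 <:+: W')
    (ps ps' : List ℕ) (hq : ps.length = q) (hq' : ps'.length = q)
    (hsor : ps.Pairwise (· ≥ ·)) (hsor' : ps'.Pairwise (· ≥ ·))
    (hle : ∀ p ∈ ps, p ≤ n) (hle' : ∀ p ∈ ps', p ≤ n)
    (heq : insertBlocks w0 W ps = insertBlocks w0 W' ps') :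
    W = W' ∧ ps = ps' :=
  stmt_10_general w0 L₀ hlen hpre n q W W' hW hW' hav hav' ps ps' hq hq' hsor hsor' hle hle' heq
end

section
/- Let Σ be a finite alphabet, W₀ a word over Σ of length L₀ ≥ 1 with no proper nonempty prefix equal to a suffix, and let b_n be the number of words of length n over Σ avoiding W₀ as a factor, a_n = |Σ|^n the total number of words. Then for all n, a_n ≥ ∑_{q=0}^{⌊n/L₀⌋} C(n - qL₀ + q, q) · b_{n - qL₀}. -/
set_option linter.unusedSectionVars false
namespace Stmt11

variable {A : Type*}

def rep (w0 : List A) (k : ℕ) : List A := (List.replicate k w0).flatten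

def ins (w0 : List A) : List ℕ → List A → List A
  | [], u => u
  | k :: _, [] => rep w0 k
  | k :: c, a :: u => rep w0 k ++ a :: ins w0 c u

lemma rep_succ (w0 : List A) (k : ℕ) : rep w0 (k+1) = w0 ++ rep w0 k := by
  simp [rep, List.replicate_succ]

lemma ins_zero_cons (w0 : List A) (c : List ℕ) (a : A) (u : List A) :
    ins w0 (0 :: c) (a :: u) = a :: ins w0 c u := by
  simp [ins, rep]

lemma ins_succ (w0 : List A) (k : ℕ) (c : List ℕ) (u : List A) :
    ins w0 ((k+1) :: c) u = w0 ++ ins w0 (k :: c) u := by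
  cases u <;> simp [ins, rep_succ]

lemma rep_length (w0 : List A) (k : ℕ) : (rep w0 k).length = k * w0.length := by
  simp [rep, List.length_flatten, List.map_replicate, Nat.mul_comm]

lemma ins_length (w0 : List A) : ∀ (u : List A) (c : List ℕ), c.length = u.length + 1 →
    (ins w0 c u).length = c.sum * w0.length + u.length
  | [], [k], _ => by simp [ins, rep_length]
  | a :: u, k :: c, h => by
    have hc : c.length = u.length + 1 := by simpa using h
    simp only [ins, List.length_append, rep_length, List.length_cons,
      ins_length w0 u c hc, List.sum_cons]
    ring

section Main

variable {w0 : List A} {L₀ : ℕ} (hlen : w0.length = L₀) (hL₀ : 1 ≤ L₀)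
  (hpre : ∀ k, 1 ≤ k → k ≤ L₀ - 1 → w0.take k ≠ w0.drop (L₀ - k))

include hlen hpre in
/-- A proper suffix of `w0` that is a prefix of `w0 ++ t` yields a contradiction. -/
lemma pref_contra {s t : List A} (h1 : 1 ≤ s.length) (h2 : s.length ≤ L₀ - 1)
    (hs : s = w0.drop (L₀ - s.length)) (h : s <+: w0 ++ t) : False := by
  have hsw : s <+: w0 := by
    refine List.prefix_of_prefix_length_le h (List.prefix_append w0 t) ?_
    rw [hlen]; omega
  have : w0.take s.length = w0.drop (L₀ - s.length) := by
    conv_lhs => rw [← List.prefix_iff_eq_take.mp hsw]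
    exact hs
  exact hpre s.length h1 h2 this

include hlen hL₀ hpre in
/-- Key lemma: a nonempty proper suffix `s` of `w0` cannot be a prefix of `ins w0 c u`
when the already-matched part `w0.take (L₀ - s.length)` followed by `u` avoids `w0`. -/
lemma lemM : ∀ (u : List A) (c : List ℕ) (s : List A), 1 ≤ s.length → s.length ≤ L₀ - 1 →
    s = w0.drop (L₀ - s.length) →
    ¬ w0 <:+: (w0.take (L₀ - s.length) ++ u) →
    s <+: ins w0 c u → False := by
  intro u
  induction u with
  | nil =>
    intro c s h1 h2 hs havoid hpref
    match c with
    | [] =>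
      simp only [ins, List.prefix_nil] at hpref
      simp [hpref] at h1
    | 0 :: c' =>
      simp only [ins, rep, List.replicate, List.flatten_nil, List.prefix_nil] at hpref
      simp [hpref] at h1
    | (k+1) :: c' =>
      rw [ins_succ] at hpref
      exact pref_contra hlen hpre h1 h2 hs hpref
  | cons a u' ih =>
    intro c s h1 h2 hs havoid hpref
    match c with
    | [] =>
      -- s <+: a :: u', so w0 is an infix of take ++ (a :: u')
      apply havoid
      obtain ⟨r, hr⟩ := hpref
      simp only [ins] at hr
      have key : w0.take (L₀ - s.length) ++ s = w0 := by
        conv_rhs => rw [← List.take_append_drop (L₀ - s.length) w0]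
        rw [← hs]
      exact ⟨[], r, by rw [List.nil_append, ← hr, ← List.append_assoc, key]⟩
    | (k+1) :: c' =>
      rw [ins_succ] at hpref
      exact pref_contra hlen hpre h1 h2 hs hpref
    | 0 :: c' =>
      rw [ins_zero_cons] at hpref
      match s, hpref with
      | b :: s', hp =>
        rw [List.cons_prefix_cons] at hp
        obtain ⟨hb, hp'⟩ := hp
        subst hb
        rcases eq_or_ne s' [] with rfl | hne
        · -- s = [b], entirely matched: w0 is a factor
          apply havoid
          have hdrop1 : w0.drop (L₀ - 1) = [b] := by
            have := hs.symm
            simpa using this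
          have key : w0.take (L₀ - 1) ++ [b] = w0 := by
            conv_rhs => rw [← List.take_append_drop (L₀ - 1) w0]
            rw [hdrop1]
          refine ⟨[], u', ?_⟩
          simp only [List.nil_append, List.length_cons, List.length_nil, Nat.zero_add]
          have hb : b :: u' = [b] ++ u' := rfl
          rw [hb, ← List.append_assoc, key]
        · -- recurse on s'
          have hslen : s'.length + 1 = (b :: s').length := rfl
          have h1' : 1 ≤ s'.length := by
            cases s' with | nil => exact absurd rfl hne | cons x xs => simp
          have h2' : s'.length ≤ L₀ - 1 := by
            simp only [List.length_cons] at h2; omega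
          have hLs : L₀ - s'.length = (L₀ - (b :: s').length) + 1 := by
            simp only [List.length_cons] at h2 ⊢; omega
          have hdrop : w0.drop (L₀ - (b :: s').length) = b :: s' := hs.symm
          have hs' : s' = w0.drop (L₀ - s'.length) := by
            rw [hLs, ← List.tail_drop, hdrop]
            rfl
          have htake : w0.take (L₀ - s'.length) = w0.take (L₀ - (b :: s').length) ++ [b] := by
            rw [hLs, List.take_add, hdrop]
            rfl
          have havoid' : ¬ w0 <:+: (w0.take (L₀ - s'.length) ++ u') := by
            rw [htake, List.append_assoc]
            simpa using havoid
          exact ih c' s' h1' h2' hs' havoid' hp'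

include hlen hL₀ hpre in
/-- `w0` is not a prefix of `ins w0 (0 :: c) (a :: u)` when `a :: u` avoids `w0`. -/
lemma noPrefix {u : List A} {c : List ℕ} {a : A} (havoid : ¬ w0 <:+: (a :: u)) :
    ¬ w0 <+: ins w0 (0 :: c) (a :: u) := by
  intro hp
  rw [ins_zero_cons] at hp
  obtain ⟨b, t, hw⟩ : ∃ b t, w0 = b :: t := by
    cases w0 with
    | nil => simp at hlen; omega
    | cons b t => exact ⟨b, t, rfl⟩
  rw [hw, List.cons_prefix_cons, ← hw] at hp
  obtain ⟨hb, hp'⟩ := hp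
  rcases eq_or_ne t [] with rfl | hne
  · exact havoid ⟨[], u, by simp [hw, hb]⟩
  · have hlt : t.length + 1 = L₀ := by
      have hlen' := hlen
      rw [hw] at hlen'
      simpa using hlen'
    have h1 : 1 ≤ t.length := by
      cases t with | nil => exact absurd rfl hne | cons x xs => simp
    have h2 : t.length ≤ L₀ - 1 := by omega
    have hts : t.length = L₀ - 1 := by omega
    have h11 : L₀ - t.length = 1 := by omega
    have hs : t = w0.drop (L₀ - t.length) := by
      rw [h11, hw]
      simp
    have havoid' : ¬ w0 <:+: (w0.take (L₀ - t.length) ++ u) := by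
      rw [h11]
      have ht1 : w0.take 1 = [a] := by rw [hw, hb]; rfl
      rw [ht1]
      simpa using havoid
    exact lemM hlen hL₀ hpre u c t h1 h2 hs havoid' hp'

include hlen hL₀ hpre in
/-- Injectivity of the insertion map. -/
lemma lemInj : ∀ (N : ℕ) (u : List A) (c : List ℕ) (u' : List A) (c' : List ℕ),
    u.length + c.sum = N →
    c.length = u.length + 1 → c'.length = u'.length + 1 →
    ¬ w0 <:+: u → ¬ w0 <:+: u' →
    ins w0 c u = ins w0 c' u' → c = c' ∧ u = u' := by
  intro N
  induction N using Nat.strong_induction_on with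
  | _ N ih =>
    intro u c u' c' hN hc hc' hav hav' heq
    match c, c' with
    | k :: c₁, k' :: c₁' =>
      have hw0ne : w0 ≠ [] := by
        intro h
        rw [h] at hlen
        simp at hlen
        omega
      match k, k' with
      | 0, 0 =>
        match u, u' with
        | [], [] =>
          have h1 : c₁ = [] := by simpa using hc
          have h2 : c₁' = [] := by simpa using hc'
          subst h1; subst h2
          exact ⟨rfl, rfl⟩
        | [], a' :: u₁' =>
          rw [ins_zero_cons] at heq
          simp [ins, rep] at heq
        | a :: u₁, [] =>
          rw [ins_zero_cons] at heq
          simp [ins, rep] at heq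
        | a :: u₁, a' :: u₁' =>
          rw [ins_zero_cons, ins_zero_cons] at heq
          injection heq with hA heq'
          subst hA
          have hav₁ : ¬ w0 <:+: u₁ := fun h => hav (h.trans (List.suffix_cons a u₁).isInfix)
          have hav₁' : ¬ w0 <:+: u₁' := fun h => hav' (h.trans (List.suffix_cons a u₁').isInfix)
          have hN' : u₁.length + c₁.sum < N := by
            subst hN
            simp only [List.length_cons, List.sum_cons]
            omega
          obtain ⟨hce, hue⟩ := ih _ hN' u₁ c₁ u₁' c₁' rfl (by simpa using hc) (by simpa using hc')
            hav₁ hav₁' heq'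
          exact ⟨by rw [hce], by rw [hue]⟩
      | kk + 1, 0 =>
        rw [ins_succ] at heq
        match u' with
        | [] =>
          simp [ins, rep] at heq
          exact absurd heq.1 hw0ne
        | a' :: u₁' =>
          exact absurd ⟨_, heq⟩ (noPrefix hlen hL₀ hpre hav')
      | 0, kk' + 1 =>
        rw [ins_succ] at heq
        match u with
        | [] =>
          simp [ins, rep] at heq
          exact absurd heq.1 hw0ne
        | a :: u₁ =>
          exact absurd ⟨_, heq.symm⟩ (noPrefix hlen hL₀ hpre hav)
      | kk + 1, kk' + 1 =>
        rw [ins_succ, ins_succ] at heq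
        have heq' := List.append_cancel_left heq
        have hN' : u.length + (kk :: c₁).sum < N := by
          subst hN
          simp only [List.sum_cons]
          omega
        obtain ⟨hce, hue⟩ := ih _ hN' u (kk :: c₁) u' (kk' :: c₁') rfl (by simpa using hc)
          (by simpa using hc') hav hav' heq'
        injection hce with e1 e2
        exact ⟨by rw [e1, e2], hue⟩

end Main

/-- Count list of a `Sym`. -/
def cnt {m q : ℕ} (s : Sym (Fin (m+1)) q) : List ℕ :=
  List.ofFn (fun i : Fin (m+1) => Multiset.count i (s : Multiset (Fin (m+1))))

lemma cnt_length {m q : ℕ} (s : Sym (Fin (m+1)) q) : (cnt s).length = m + 1 := by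
  simp [cnt]

lemma cnt_sum {m q : ℕ} (s : Sym (Fin (m+1)) q) : (cnt s).sum = q := by
  rw [cnt, List.sum_ofFn]
  rw [Multiset.sum_count_eq_card (fun a _ => Finset.mem_univ a)]
  exact s.2

lemma cnt_inj {m q q' : ℕ} {s : Sym (Fin (m+1)) q} {s' : Sym (Fin (m+1)) q'}
    (h : cnt s = cnt s') : (s : Multiset (Fin (m+1))) = (s' : Multiset (Fin (m+1))) := by
  have hfn := List.ofFn_injective h
  rw [Multiset.ext]
  intro a
  exact congrFun hfn a

end Stmt11

open Stmt11 in
theorem stmt_11 {A : Type*} [Fintype A] [DecidableEq A]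
    (w0 : List A) (L₀ : ℕ) (hlen : w0.length = L₀) (hL₀ : 1 ≤ L₀)
    (hpre : ∀ k, 1 ≤ k → k ≤ L₀ - 1 → w0.take k ≠ w0.drop (L₀ - k))
    (b : ℕ → ℕ)
    (hbdef : ∀ n, b n = Finset.card
      (Finset.univ.filter (fun w : Fin n → A => ¬ w0 <:+: List.ofFn w)))
    (n : ℕ) :
    Fintype.card A ^ n ≥
      ∑ q ∈ Finset.range (n / L₀ + 1), (n - q * L₀ + q).choose q * b (n - q * L₀) := by
  classical
  have hqle : ∀ q : Fin (n / L₀ + 1), (q : ℕ) * L₀ ≤ n := by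
    intro q
    exact (Nat.le_div_iff_mul_le (by omega)).mp (Nat.lt_succ_iff.mp q.2)
  have hlength : ∀ (q : ℕ), q * L₀ ≤ n → ∀ (u : Fin (n - q * L₀) → A)
      (s : Sym (Fin (n - q * L₀ + 1)) q),
      (ins w0 (cnt s) (List.ofFn u)).length = n := by
    intro q hq u s
    rw [ins_length w0 _ _ (by simp [cnt_length])]
    rw [cnt_sum, hlen, List.length_ofFn]
    omega
  set F : ((q : Fin (n / L₀ + 1)) ×
      ({u : Fin (n - (q : ℕ) * L₀) → A // ¬ w0 <:+: List.ofFn u} ×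
        Sym (Fin (n - (q : ℕ) * L₀ + 1)) (q : ℕ))) → (Fin n → A) := fun x => fun i =>
    (ins w0 (cnt x.2.2) (List.ofFn x.2.1.val)).get
      ⟨i.val, by rw [hlength _ (hqle x.1) _ _]; exact i.2⟩ with hF
  have hinj : Function.Injective F := by
    rintro ⟨q, u, s⟩ ⟨q', u', s'⟩ h
    have hEq : ins w0 (cnt s) (List.ofFn u.val) = ins w0 (cnt s') (List.ofFn u'.val) := by
      apply List.ext_get
      · rw [hlength _ (hqle q) u.val s, hlength _ (hqle q') u'.val s']
      · intro i h1 h2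
        have hi : i < n := by rw [← hlength _ (hqle q) u.val s]; exact h1
        have := congrFun h ⟨i, hi⟩
        simpa [hF] using this
    obtain ⟨hc, hu⟩ := lemInj hlen hL₀ hpre _ _ _ _ _ rfl
      (by rw [cnt_length, List.length_ofFn]) (by rw [cnt_length, List.length_ofFn])
      u.2 u'.2 hEq
    have hq : q = q' := by
      apply Fin.ext
      have := congrArg List.sum hc
      rwa [cnt_sum, cnt_sum] at this
    subst hq
    have hu2 : u = u' := Subtype.ext (List.ofFn_injective hu)
    have hs2 : s = s' := Subtype.ext (cnt_inj hc)
    rw [hu2, hs2]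
  have hcard := Fintype.card_le_of_injective F hinj
  have hDcard : Fintype.card ((q : Fin (n / L₀ + 1)) ×
      ({u : Fin (n - (q : ℕ) * L₀) → A // ¬ w0 <:+: List.ofFn u} ×
        Sym (Fin (n - (q : ℕ) * L₀ + 1)) (q : ℕ))) =
      ∑ q ∈ Finset.range (n / L₀ + 1), (n - q * L₀ + q).choose q * b (n - q * L₀) := by
    rw [Fintype.card_sigma]
    rw [← Fin.sum_univ_eq_sum_range (fun q => (n - q * L₀ + q).choose q * b (n - q * L₀))]
    apply Finset.sum_congr rfl
    intro q _
    rw [Fintype.card_prod]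
    rw [Fintype.card_subtype]
    rw [Sym.card_sym_eq_choose, Fintype.card_fin]
    rw [← hbdef]
    have : n - (q : ℕ) * L₀ + 1 + (q : ℕ) - 1 = n - (q : ℕ) * L₀ + (q : ℕ) := by omega
    rw [this, Nat.mul_comm]
  have hfun : Fintype.card (Fin n → A) = Fintype.card A ^ n := by
    rw [Fintype.card_fun, Fintype.card_fin]
  rw [hfun, hDcard] at hcard
  exact hcard
end
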